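/- Let k be a positive integer. If X is an S(k-1)-space (with S(0)-space meaning T1), then |X| ≤ 2^{s_{2k-1}(X)·ψ_{2k-1}(X)}. -/

import Mathlib

open Cardinal Set

universe u

variable {X : Type u}

/-- `x` is S(n)-separated from `A`. -/
def SSep [TopologicalSpace X] : ℕ → X → Set X → Prop
  | 0, x, A => x ∉ closure A
  | (n+1), x, A => ∃ U : ℕ → Set X, (∀ i ≤ n, IsOpen (U i)) ∧ x ∈ U 0 ∧
      (∀ i < n, closure (U i) ⊆ U (i+1)) ∧ closure (U n) ∩ A = ∅

/-- `X` is an S(n)-space. -/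
def SSpace (n : ℕ) (X : Type u) [TopologicalSpace X] : Prop :=
  ∀ x y : X, x ≠ y → SSep n x {y}

/-- `U` is an S(2k-1)-neighborhood of `x` (for `k ≥ 1`). -/
def SOddNhd [TopologicalSpace X] (k : ℕ) (x : X) (U : Set X) : Prop :=
  ∃ V : ℕ → Set X, (∀ i < k, IsOpen (V i)) ∧ x ∈ V 0 ∧
    (∀ i, i + 1 < k → closure (V i) ⊆ V (i+1)) ∧ V (k-1) ⊆ U

/-- `U` is an S(2k)-neighborhood of `x` (for `k ≥ 1`). -/
def SEvenNhd [TopologicalSpace X] (k : ℕ) (x : X) (U : Set X) : Prop :=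
  ∃ V : ℕ → Set X, (∀ i < k, IsOpen (V i)) ∧ x ∈ V 0 ∧
    (∀ i, i + 1 < k → closure (V i) ⊆ V (i+1)) ∧ closure (V (k-1)) ⊆ U

/-- `U` is an open S(2k-1)-neighborhood of `x`. -/
def SOpenNhd [TopologicalSpace X] (k : ℕ) (x : X) (U : Set X) : Prop :=
  IsOpen U ∧ SOddNhd k x U

/-- `U` is an S(2k-1)-open set. -/
def SOpen [TopologicalSpace X] (k : ℕ) (U : Set X) : Prop :=
  IsOpen U ∧ ∃ x, SOddNhd k x U

/-- The S(2k-1)-closure `θ_{2k-1}(A)`. -/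
def thetaOdd [TopologicalSpace X] (k : ℕ) (A : Set X) : Set X :=
  {x | ∀ U : Set X, SOpenNhd k x U → (U ∩ A).Nonempty}

/-- The S(2k)-closure `θ_{2k}(A)`. -/
def thetaEven [TopologicalSpace X] (k : ℕ) (A : Set X) : Set X :=
  {x | ∀ U : Set X, SOpenNhd k x U → (closure U ∩ A).Nonempty}

/-- `D` is S(2k-1)-discrete. -/
def SOddDiscrete [TopologicalSpace X] (k : ℕ) (D : Set X) : Prop :=
  ∀ x ∈ D, ∃ U : Set X, SOpenNhd k x U ∧ U ∩ D = {x}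

/-- `D` is S(2k)-discrete. -/
def SEvenDiscrete [TopologicalSpace X] (k : ℕ) (D : Set X) : Prop :=
  ∀ x ∈ D, ∃ U : Set X, SOpenNhd k x U ∧ closure U ∩ D = {x}

/-- The S(2k-1)-spread `s_{2k-1}(X)`. -/
noncomputable def spreadOdd (k : ℕ) (X : Type u) [TopologicalSpace X] : Cardinal :=
  (⨆ D : {D : Set X // SOddDiscrete k D}, #D.1) ⊔ Cardinal.aleph0

/-- The S(2k)-spread `s_{2k}(X)`. -/
noncomputable def spreadEven (k : ℕ) (X : Type u) [TopologicalSpace X] : Cardinal :=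
  (⨆ D : {D : Set X // SEvenDiscrete k D}, #D.1) ⊔ Cardinal.aleph0

/-- The S(2k-1)-cellularity `c_{2k-1}(X)`. -/
noncomputable def cellOdd (k : ℕ) (X : Type u) [TopologicalSpace X] : Cardinal :=
  (⨆ F : {F : Set (Set X) // (∀ U ∈ F, SOpen k U ∧ U.Nonempty) ∧
      (∀ U ∈ F, ∀ V ∈ F, U ≠ V → U ∩ V = ∅)}, #F.1) ⊔ Cardinal.aleph0

/-- The S(2k)-cellularity `c_{2k}(X)`. -/
noncomputable def cellEven (k : ℕ) (X : Type u) [TopologicalSpace X] : Cardinal :=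
  (⨆ F : {F : Set (Set X) // (∀ U ∈ F, SOpen k U ∧ U.Nonempty) ∧
      (∀ U ∈ F, ∀ V ∈ F, U ≠ V → closure U ∩ closure V = ∅)}, #F.1) ⊔ Cardinal.aleph0

/-- The S(2k-1)-character `χ_{2k-1}(X)`. -/
noncomputable def charOdd (k : ℕ) (X : Type u) [TopologicalSpace X] : Cardinal :=
  sInf {c | Cardinal.aleph0 ≤ c ∧ ∀ x : X, ∃ B : Set (Set X), #B ≤ c ∧
    (∀ U ∈ B, SOpenNhd k x U) ∧
    ∀ U : Set X, SOpenNhd k x U → ∃ V ∈ B, V ⊆ U}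

/-- The S(2k)-character `χ_{2k}(X)`. -/
noncomputable def charEven (k : ℕ) (X : Type u) [TopologicalSpace X] : Cardinal :=
  sInf {c | Cardinal.aleph0 ≤ c ∧ ∀ x : X, ∃ B : Set (Set X), #B ≤ c ∧
    (∀ V ∈ B, IsClosed V ∧ SOddNhd k x V) ∧
    ∀ W : Set X, SOpenNhd k x W → ∃ V ∈ B, V ⊆ closure W}

/-- The S(2k-1)-pseudocharacter `ψ_{2k-1}(X)`. -/
noncomputable def psiOdd (k : ℕ) (X : Type u) [TopologicalSpace X] : Cardinal :=
  sInf {c | Cardinal.aleph0 ≤ c ∧ ∀ x : X, ∃ B : Set (Set X), #B ≤ c ∧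
    (∀ U ∈ B, SOpenNhd k x U) ∧ ⋂₀ B = {x}}

/-- The S(2k)-pseudocharacter `ψ_{2k}(X)`. -/
noncomputable def psiEven (k : ℕ) (X : Type u) [TopologicalSpace X] : Cardinal :=
  sInf {c | Cardinal.aleph0 ≤ c ∧ ∀ x : X, ∃ B : Set (Set X), #B ≤ c ∧
    (∀ U ∈ B, SOpenNhd k x U) ∧ (⋂ U ∈ B, closure U) = {x}}

/-- The usual pseudocharacter `ψ(X)`. -/
noncomputable def psi (X : Type u) [TopologicalSpace X] : Cardinal :=
  sInf {c | Cardinal.aleph0 ≤ c ∧ ∀ x : X, ∃ B : Set (Set X), #B ≤ c ∧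
    (∀ U ∈ B, IsOpen U) ∧ ⋂₀ B = {x}}

/-!
Hajnal–Juhász argument. Fix, for every point `x`, a family `V x i` (`i < κ`) of open
S(2k-1)-neighbourhoods with intersection `{x}`, and colour a pair `a ≠ b` by the indices
`(p a b, p b a)` of members of `V a`, `V b` missing the other point. If `|X| > 2^κ`, the
Erdős–Rado theorem `(2^κ)⁺ → (κ⁺)²_κ` yields a homogeneous set of size `κ⁺`, and homogeneity makes
it S(2k-1)-discrete, contradicting `s_{2k-1}(X) ≤ κ`.
-/

section ErdosRado

variable {Z C : Type u}

lemma exists_forall_lt_of_mk_le {κ : Cardinal.{u}} (hκ : ℵ₀ ≤ κ)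
    {s : Set (Order.succ κ).ord.ToType} (hs : #s ≤ κ) : ∃ a, ∀ b ∈ s, b < a :=
  not_isCofinal_iff.mp fun h => (Order.lt_succ κ).not_ge <| by
    simpa [Ordinal.cof_toType, (isRegular_succ hκ).cof_ord] using (Order.cof_le h).trans hs

lemma mk_iUnion_le_of_le {ι : Type u} {μ : Cardinal.{u}} (hμ : ℵ₀ ≤ μ) (hι : #ι ≤ μ)
    {f : ι → Set Z} (hf : ∀ i, #(f i) ≤ μ) : #(⋃ i, f i) ≤ μ :=
  calc #(⋃ i, f i) ≤ #ι * ⨆ i, #(f i) := mk_iUnion_le f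
    _ ≤ μ * μ := mul_le_mul' hι (ciSup_le' hf)
    _ = μ := mul_eq_self hμ

/-- `T` is the union of the tower `Y α = ⋃ β < α, step (Y β)` of length `κ⁺`; by regularity of
`κ⁺` a subset of `T` of size `≤ κ` already lies in a single stage. -/
lemma exists_closed_of_mk_step_le {κ μ : Cardinal.{u}} (hκ : ℵ₀ ≤ κ) (hκμ : κ < μ)
    (step : Set Z → Set Z) (hstep : ∀ S : Set Z, #S ≤ μ → #(step S) ≤ μ) :
    ∃ T : Set Z, #T ≤ μ ∧ ∀ D ⊆ T, #D ≤ κ → ∃ S : Set Z, D ⊆ S ∧ step S ⊆ T := by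
  have hμ : ℵ₀ ≤ μ := hκ.trans hκμ.le
  have hι : #(Order.succ κ).ord.ToType ≤ μ := (mk_ord_toType _).trans_le (Order.succ_le_of_lt hκμ)
  let Y : (Order.succ κ).ord.ToType → Set Z :=
    wellFounded_lt.fix fun α Y => ⋃ β : Iio α, step (Y β β.2)
  have hY : ∀ α, Y α = ⋃ β : Iio α, step (Y β) := wellFounded_lt.fix_eq _
  have hYμ : ∀ α, #(Y α) ≤ μ := fun α => by
    induction α using WellFoundedLT.induction with
    | ind α ih =>
      rw [hY α]
      exact mk_iUnion_le_of_le hμ ((mk_subtype_le _).trans hι) fun β => hstep _ (ih β β.2)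
  refine ⟨⋃ α, step (Y α), mk_iUnion_le_of_le hμ hι fun α => hstep _ (hYμ α),
    fun D hDT hDκ => ?_⟩
  choose idx hidx using fun d : D => mem_iUnion.mp (hDT d.2)
  obtain ⟨γ, hγ⟩ := exists_forall_lt_of_mk_le hκ (mk_range_le.trans hDκ : #(range idx) ≤ κ)
  refine ⟨Y γ, fun d hd => ?_, subset_iUnion (fun α => step (Y α)) γ⟩
  rw [hY γ]
  exact mem_iUnion.mpr ⟨⟨idx ⟨d, hd⟩, hγ _ (mem_range_self _)⟩, hidx _⟩

lemma mk_sigma_fun_small_subset_le {κ : Cardinal.{u}} (hκ : ℵ₀ ≤ κ) (hC : #C ≤ κ) {S : Set Z}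
    (hS : #S ≤ 2 ^ κ) : #(Σ D : {D : Set Z // D ⊆ S ∧ #D ≤ κ}, D.1 → C) ≤ 2 ^ κ := by
  have h2κ : ℵ₀ ≤ 2 ^ κ := hκ.trans (cantor κ).le
  have hpow : ((2 : Cardinal) ^ κ) ^ κ = 2 ^ κ := by rw [← power_mul, mul_eq_self hκ]
  have hsubsets : #{D : Set Z // D ⊆ S ∧ #D ≤ κ} ≤ 2 ^ κ :=
    (mk_bounded_subset_le S κ).trans <| (power_le_power_right (max_le hS h2κ)).trans_eq hpow
  have hfun : ∀ D : {D : Set Z // D ⊆ S ∧ #D ≤ κ}, #(D.1 → C) ≤ 2 ^ κ := fun D => by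
    rw [← power_def]
    calc #C ^ #D.1 ≤ (2 ^ κ) ^ #D.1 := power_le_power_right (hC.trans (cantor κ).le)
      _ ≤ (2 ^ κ) ^ κ := power_le_power_left (power_ne_zero κ two_ne_zero) D.2.2
      _ = 2 ^ κ := hpow
  rw [mk_sigma]
  calc sum (fun D : {D : Set Z // D ⊆ S ∧ #D ≤ κ} => #(D.1 → C))
      ≤ sum (fun _ : {D : Set Z // D ⊆ S ∧ #D ≤ κ} => (2 : Cardinal) ^ κ) := sum_le_sum _ _ hfun
    _ = #{D : Set Z // D ⊆ S ∧ #D ≤ κ} * 2 ^ κ := sum_const' _ _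
    _ ≤ 2 ^ κ * 2 ^ κ := mul_le_mul_left hsubsets _
    _ = 2 ^ κ := mul_eq_self h2κ

def IsWitnessClosed (F : Z → Z → C) (κ : Cardinal.{u}) (T : Set Z) : Prop :=
  ∀ D ⊆ T, #D ≤ κ → ∀ y ∉ D, ∃ v ∈ T, v ∉ D ∧ ∀ d ∈ D, F d v = F d y

lemma exists_isWitnessClosed [Nonempty Z] (F : Z → Z → C) {κ : Cardinal.{u}} (hκ : ℵ₀ ≤ κ)
    (hC : #C ≤ κ) : ∃ T : Set Z, #T ≤ 2 ^ κ ∧ IsWitnessClosed F κ T := by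
  let w : (D : Set Z) → (D → C) → Z := fun D φ =>
    Classical.epsilon fun v => v ∉ D ∧ ∀ d : D, F d v = φ d
  obtain ⟨T, hTκ, hT⟩ := exists_closed_of_mk_step_le hκ (cantor κ)
    (fun S => range fun p : Σ D : {D : Set Z // D ⊆ S ∧ #D ≤ κ}, D.1 → C => w p.1.1 p.2)
    fun S hS => mk_range_le.trans (mk_sigma_fun_small_subset_le hκ hC hS)
  refine ⟨T, hTκ, fun D hDT hDκ y hy => ?_⟩
  obtain ⟨S, hDS, hST⟩ := hT D hDT hDκ
  obtain ⟨hvD, hvF⟩ := Classical.epsilon_spec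
    (p := fun v => v ∉ D ∧ ∀ d : D, F d v = F d y) ⟨y, hy, fun _ => rfl⟩
  exact ⟨_, hST ⟨⟨⟨D, hDS, hDκ⟩, fun d => F d y⟩, rfl⟩, hvD, fun d hd => hvF ⟨d, hd⟩⟩

/-- Taking the terms inside `T` keeps `y` out of every initial segment `D`, so `d ↦ F d y` on `D`
can be realised once more. -/
lemma IsWitnessClosed.exists_injective_seq {F : Z → Z → C} {κ : Cardinal.{u}} {T : Set Z}
    (hT : IsWitnessClosed F κ T) {y : Z} (hy : y ∉ T) {ι : Type u} [LinearOrder ι]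
    [WellFoundedLT ι] (hι : ∀ α : ι, #(Iio α) ≤ κ) :
    ∃ x : ι → Z, Function.Injective x ∧ ∀ β α, β < α → F (x β) (x α) = F (x β) y := by
  have : Nonempty Z := ⟨y⟩
  let g : Set Z → Z := fun D => Classical.epsilon fun v => v ∈ T ∧ v ∉ D ∧ ∀ d ∈ D, F d v = F d y
  have hg : ∀ D ⊆ T, #D ≤ κ → g D ∈ T ∧ g D ∉ D ∧ ∀ d ∈ D, F d (g D) = F d y :=
    fun D hDT hDκ => Classical.epsilon_spec (hT D hDT hDκ y fun h => hy (hDT h))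
  let x : ι → Z := wellFounded_lt.fix fun α x => g (range fun β : Iio α => x β β.2)
  have hx : ∀ α, x α = g (x '' Iio α) := fun α => by
    rw [image_eq_range]
    exact wellFounded_lt.fix_eq _ α
  have key : ∀ α, x α ∈ T ∧ x α ∉ x '' Iio α ∧ ∀ d ∈ x '' Iio α, F d (x α) = F d y := fun α => by
    induction α using WellFoundedLT.induction with
    | ind α ih =>
      rw [hx α]
      exact hg _ (image_subset_iff.mpr fun β hβ => (ih β hβ).1) (mk_image_le.trans (hι α))
  refine ⟨x, fun a b hab => ?_, fun β α hβα => (key α).2.2 _ (mem_image_of_mem x hβα)⟩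
  by_contra hne
  rcases lt_or_gt_of_ne hne with h | h
  · exact (key b).2.1 ⟨a, h, hab⟩
  · exact (key a).2.1 ⟨b, h, hab.symm⟩

/-- Erdős–Rado for pairs, `(2^κ)⁺ → (κ⁺)²_κ`, for colourings of ordered pairs. -/
theorem exists_homogeneous_of_two_pow_lt (F : Z → Z → C) {κ : Cardinal.{u}} (hκ : ℵ₀ ≤ κ)
    (hC : #C ≤ κ) (hZ : 2 ^ κ < #Z) :
    ∃ (ι : Type u) (_ : LinearOrder ι) (x : ι → Z) (c : C),
      κ < #ι ∧ Function.Injective x ∧ ∀ a b, a < b → F (x a) (x b) = c := by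
  have : Nonempty Z := mk_ne_zero_iff.mp (zero_le.trans_lt hZ).ne'
  obtain ⟨T, hTκ, hT⟩ := exists_isWitnessClosed F hκ hC
  obtain ⟨y, hy⟩ : ∃ y, y ∉ T := by
    by_contra! hT
    exact (hZ.trans_le (mk_univ.symm.le.trans (mk_le_mk_of_subset fun z _ => hT z))).not_ge hTκ
  obtain ⟨x, hx, hxy⟩ := hT.exists_injective_seq hy (ι := (Order.succ κ).ord.ToType)
    fun α => Order.lt_succ_iff.mp (by simpa using mk_Iio_lt α)
  obtain ⟨c, hc⟩ := infinite_pigeonhole_card (fun α => F (x α) y) (Order.succ κ)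
    (mk_ord_toType _).ge (hκ.trans (Order.le_succ κ))
    (by rw [(isRegular_succ hκ).cof_ord]; exact hC.trans_lt (Order.lt_succ κ))
  exact ⟨(fun α => F (x α) y) ⁻¹' {c}, inferInstance, fun α => x α, c, Order.succ_le_iff.mp hc,
    hx.comp Subtype.val_injective, fun a b hab => (hxy a b hab).trans a.2⟩

end ErdosRado

section SSpace

variable {X : Type u} [TopologicalSpace X] {k : ℕ}

lemma subset_of_closure_subset_succ {U : ℕ → Set X} {n : ℕ}
    (hU : ∀ i < n, closure (U i) ⊆ U (i + 1)) {i : ℕ} (hi : i ≤ n) : U 0 ⊆ U i := by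
  induction i with
  | zero => rfl
  | succ i ih => exact (ih (by omega)).trans (subset_closure.trans (hU i (by omega)))

lemma SOddNhd.mem {x : X} {U : Set X} (h : SOddNhd k x U) : x ∈ U := by
  obtain ⟨V, -, hx, hV, hVU⟩ := h
  exact hVU (subset_of_closure_subset_succ (n := k - 1) (fun i hi => hV i (by omega)) le_rfl hx)

lemma sOpenNhd_univ (k : ℕ) (x : X) : SOpenNhd k x univ :=
  ⟨isOpen_univ, fun _ => univ, fun _ _ => isOpen_univ, mem_univ x, fun _ _ => subset_univ _,
    subset_rfl⟩

lemma SOpenNhd.inter {x : X} {U U' : Set X} (h : SOpenNhd k x U) (h' : SOpenNhd k x U') :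
    SOpenNhd k x (U ∩ U') := by
  obtain ⟨hU, V, hVo, hxV, hV, hVU⟩ := h
  obtain ⟨hU', V', hV'o, hxV', hV', hV'U'⟩ := h'
  exact ⟨hU.inter hU', fun i => V i ∩ V' i, fun i hi => (hVo i hi).inter (hV'o i hi), ⟨hxV, hxV'⟩,
    fun i hi => (closure_inter_subset_inter_closure _ _).trans
      (inter_subset_inter (hV i hi) (hV' i hi)),
    inter_subset_inter hVU hV'U'⟩

lemma SSpace.t1Space {n : ℕ} (h : SSpace n X) : T1Space X := by
  rw [t1Space_iff_exists_open]
  intro x y hxy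
  cases n with
  | zero => exact ⟨(closure {y})ᶜ, isClosed_closure.isOpen_compl, h x y hxy,
      fun hy => hy (subset_closure rfl)⟩
  | succ m =>
    obtain ⟨U, hUo, hxU, hU, hUy⟩ := h x y hxy
    refine ⟨U 0, hUo 0 m.zero_le, hxU, fun hy => ?_⟩
    exact inter_singleton_eq_empty.mp hUy
      (subset_closure (subset_of_closure_subset_succ hU le_rfl hy))

lemma SSpace.exists_sOpenNhd_notMem (h : SSpace (k - 1) X) {x y : X} (hxy : x ≠ y) :
    ∃ U, SOpenNhd k x U ∧ y ∉ U := by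
  have := h.t1Space
  refine ⟨{y}ᶜ, ⟨isOpen_compl_singleton, ?_⟩, fun hy => hy rfl⟩
  obtain hk | ⟨m, rfl⟩ : k ≤ 1 ∨ ∃ m, k = m + 2 := by
    rcases k with _ | _ | m <;> simp
  · exact ⟨fun _ => {y}ᶜ, fun _ _ => isOpen_compl_singleton, hxy, fun i hi => by omega, subset_rfl⟩
  · obtain ⟨V, hVo, hxV, hV, hVy⟩ := h x y hxy
    refine ⟨fun i => if i ≤ m then V i else {y}ᶜ, fun i hi => ?_, by simpa using hxV,
      fun i hi => ?_, by simp⟩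
    · dsimp only
      split_ifs with him
      · exact hVo i him
      · exact isOpen_compl_singleton
    · rcases Nat.lt_or_ge i m with him | him
      · simpa [him.le, Nat.succ_le_of_lt him] using hV i him
      · obtain rfl : i = m := by omega
        simpa [subset_compl_singleton_iff] using inter_singleton_eq_empty.mp hVy

lemma SSpace.sInter_sOpenNhd (h : SSpace (k - 1) X) (x : X) :
    ⋂₀ {U | SOpenNhd k x U} = {x} := by
  refine Subset.antisymm (fun y hy => ?_) fun _ hy U hU => (mem_singleton_iff.mp hy) ▸ hU.2.mem
  by_contra hyx
  obtain ⟨U, hU, hyU⟩ := h.exists_sOpenNhd_notMem (Ne.symm hyx)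
  exact hyU (hy U hU)

lemma SSpace.psiOdd_spec (h : SSpace (k - 1) X) :
    ℵ₀ ≤ psiOdd k X ∧ ∀ x : X, ∃ B : Set (Set X), #B ≤ psiOdd k X ∧
      (∀ U ∈ B, SOpenNhd k x U) ∧ ⋂₀ B = {x} := by
  have hne : {c | ℵ₀ ≤ c ∧ ∀ x : X, ∃ B : Set (Set X), #B ≤ c ∧
      (∀ U ∈ B, SOpenNhd k x U) ∧ ⋂₀ B = {x}}.Nonempty :=
    ⟨max (2 ^ #X) ℵ₀, le_max_right _ _, fun x => ⟨{U | SOpenNhd k x U},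
      (mk_subtype_le _).trans (mk_set.trans_le (le_max_left _ _)), fun _ hU => hU,
      h.sInter_sOpenNhd x⟩⟩
  exact csInf_mem hne

/-- The pseudobases of `ψ_{2k-1}`, reindexed by one set of size `κ` so that indices at
different points can be compared. -/
lemma SSpace.exists_sOpenNhd_family (h : SSpace (k - 1) X) {κ : Cardinal.{u}}
    (hκ : psiOdd k X ≤ κ) : ∃ V : X → κ.out → Set X,
      (∀ x i, SOpenNhd k x (V x i)) ∧ ∀ x y, ∃ i, x ≠ y → y ∉ V x i := by
  obtain ⟨hψ, hB⟩ := h.psiOdd_spec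
  choose B hBκ hBU hBx using hB
  have : Nonempty κ.out :=
    mk_ne_zero_iff.mp <| (mk_out κ).trans_ne (aleph0_pos.trans_le (hψ.trans hκ)).ne'
  have f : ∀ x, B x ↪ κ.out := fun x =>
    Classical.choice (le_def _ _ |>.mp ((hBκ x).trans (hκ.trans_eq (mk_out κ).symm)))
  refine ⟨fun x => Function.extend (f x) Subtype.val fun _ => univ, fun x i => ?_, fun x y => ?_⟩
  · dsimp only
    by_cases hi : ∃ U, f x U = i
    · obtain ⟨U, rfl⟩ := hi
      rw [(f x).injective.extend_apply]
      exact hBU x U U.2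
    · rw [Function.extend_apply' _ _ _ hi]
      exact sOpenNhd_univ k x
  · by_cases hxy : x = y
    · exact ⟨Classical.arbitrary _, fun h => (h hxy).elim⟩
    obtain ⟨U, hU, hyU⟩ : ∃ U ∈ B x, y ∉ U := by
      have hy : y ∉ ⋂₀ B x := by
        rw [hBx x]
        exact Ne.symm hxy
      simpa [mem_sInter] using hy
    exact ⟨f x ⟨U, hU⟩, fun _ => by dsimp only; rwa [(f x).injective.extend_apply]⟩

lemma mk_le_spreadOdd {D : Set X} (hD : SOddDiscrete k D) : #D ≤ spreadOdd k X :=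
  (le_ciSup Cardinal.bddAbove_of_small (⟨D, hD⟩ : {D : Set X // SOddDiscrete k D})).trans
    le_sup_left

lemma sOddDiscrete_range {ι I : Type*} [LinearOrder ι] {x : ι → X} {V : X → I → Set X}
    (hV : ∀ z i, SOpenNhd k z (V z i)) {i j : I}
    (hij : ∀ a b, a < b → x b ∉ V (x a) i ∧ x a ∉ V (x b) j) : SOddDiscrete k (range x) := by
  rintro _ ⟨a, rfl⟩
  refine ⟨V (x a) i ∩ V (x a) j, (hV _ i).inter (hV _ j), Subset.antisymm ?_
    (singleton_subset_iff.mpr ⟨⟨(hV _ i).2.mem, (hV _ j).2.mem⟩, a, rfl⟩)⟩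
  rintro _ ⟨⟨hi, hj⟩, b, rfl⟩
  rcases lt_trichotomy a b with hab | rfl | hba
  · exact ((hij a b hab).1 hi).elim
  · rfl
  · exact ((hij b a hba).2 hj).elim

end SSpace

theorem stmt11_general (k : ℕ) (X : Type u) [TopologicalSpace X]
    (h : SSpace (k - 1) X) :
    #X ≤ 2 ^ (spreadOdd k X * psiOdd k X) := by
  set κ := spreadOdd k X * psiOdd k X
  have hs : ℵ₀ ≤ spreadOdd k X := le_sup_right
  have hψ : ℵ₀ ≤ psiOdd k X := h.psiOdd_spec.1
  have hsκ : spreadOdd k X ≤ κ := le_mul_right (aleph0_pos.trans_le hψ).ne'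
  have hκ : ℵ₀ ≤ κ := hs.trans hsκ
  by_contra! hlt
  obtain ⟨V, hV, hsep⟩ := h.exists_sOpenNhd_family (le_mul_left (aleph0_pos.trans_le hs).ne')
  choose p hp using hsep
  have hC : #(κ.out × κ.out) ≤ κ := by rw [mk_prod, lift_id, mk_out, mul_eq_self hκ]
  obtain ⟨ι, _, x, ⟨i, j⟩, hι, hx, hc⟩ :=
    exists_homogeneous_of_two_pow_lt (fun a b => (p a b, p b a)) hκ hC hlt
  have hD : SOddDiscrete k (range x) := sOddDiscrete_range hV (i := i) (j := j) fun a b hab => by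
    obtain ⟨rfl, rfl⟩ := Prod.mk.inj (hc a b hab)
    exact ⟨hp _ _ (hx.ne hab.ne), hp _ _ (hx.ne hab.ne')⟩
  exact (hι.trans_le ((mk_range_eq x hx).ge.trans ((mk_le_spreadOdd hD).trans hsκ))).false

theorem stmt11 (k : ℕ) (hk : 1 ≤ k) (X : Type u) [TopologicalSpace X]
    (h : SSpace (k - 1) X) :
    #X ≤ 2 ^ (spreadOdd k X * psiOdd k X) :=
  stmt11_general k X h
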